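/- arXiv:2603.00963 — 4 statements merged into one kernel-verified Lean document; each statement's English description precedes it below -/
import Mathlib

section
/- Let V be a nonempty finite set and fix k ∈ V. For the function f : ℝ^V → ℝ, f(z) = softmax(z)(k), for every z ∈ ℝ^V and every direction v ∈ ℝ^V, the second directional derivative of f at z along v equals π(k)·[(v(k) − E_π(v))² − Var_π(v)], where π = softmax(z), E_π(v) = ∑_{i∈V} π(i)·v(i), and Var_π(v) = ∑_{i∈V} π(i)·v(i)² − (E_π(v))². In particular, the quadratic form of the Hessian of the (unclipped) PPO surrogate loss takes both signs depending on whether (v(k) − E_π(v))² exceeds Var_π(v). -/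
open Finset

/-- The softmax of a logit vector. -/
noncomputable def softmax {V : Type*} [Fintype V] (z : V → ℝ) : V → ℝ :=
  fun a => Real.exp (z a) / ∑ a', Real.exp (z a')

namespace SoftmaxAux

variable {V : Type*} [Fintype V] [Nonempty V]

noncomputable def Dmap (w : V → ℝ) (i : V) : (V → ℝ) →L[ℝ] ℝ :=
  softmax w i • (ContinuousLinearMap.proj i
    - ∑ j, softmax w j • (ContinuousLinearMap.proj j : (V → ℝ) →L[ℝ] ℝ))

lemma Dmap_apply (w : V → ℝ) (i : V) (u : V → ℝ) :
    Dmap w i u = softmax w i * (u i - ∑ j, softmax w j * u j) := by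
  simp [Dmap, ContinuousLinearMap.sum_apply]

lemma S_pos (w : V → ℝ) : 0 < ∑ j, Real.exp (w j) :=
  Finset.sum_pos (fun j _ => Real.exp_pos _) Finset.univ_nonempty

lemma hasFDerivAt_softmax (i : V) (w : V → ℝ) :
    HasFDerivAt (fun z => softmax z i) (Dmap w i) w := by
  have hS := S_pos w
  have hnum : HasFDerivAt (fun z : V → ℝ => Real.exp (z i))
      (Real.exp (w i) • (ContinuousLinearMap.proj i : (V → ℝ) →L[ℝ] ℝ)) w :=
    (ContinuousLinearMap.proj i : (V → ℝ) →L[ℝ] ℝ).hasFDerivAt.exp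
  have hden : HasFDerivAt (fun z : V → ℝ => ∑ j, Real.exp (z j))
      (∑ j, Real.exp (w j) • (ContinuousLinearMap.proj j : (V → ℝ) →L[ℝ] ℝ)) w := by
    exact HasFDerivAt.fun_sum fun j _ =>
      (ContinuousLinearMap.proj j : (V → ℝ) →L[ℝ] ℝ).hasFDerivAt.exp
  have hinv : HasFDerivAt (fun z : V → ℝ => (∑ j, Real.exp (z j))⁻¹)
      ((-((∑ j, Real.exp (w j)) ^ 2)⁻¹) • (∑ j, Real.exp (w j) • (ContinuousLinearMap.proj j : (V → ℝ) →L[ℝ] ℝ))) w :=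
    (hasDerivAt_inv hS.ne').comp_hasFDerivAt w hden
  have h := hnum.fun_mul hinv
  have hfun : (fun z : V → ℝ => softmax z i)
      = fun z : V → ℝ => Real.exp (z i) * (∑ j, Real.exp (z j))⁻¹ := by
    funext u; simp [softmax, div_eq_mul_inv]
  rw [hfun]
  refine h.congr_fderiv (Eq.symm ?_)
  ext u
  rw [Dmap_apply]
  simp only [ContinuousLinearMap.add_apply, ContinuousLinearMap.smul_apply,
    ContinuousLinearMap.sub_apply, ContinuousLinearMap.sum_apply,
    ContinuousLinearMap.proj_apply, smul_eq_mul, softmax]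
  have hsum : ∑ j, Real.exp (w j) / (∑ j', Real.exp (w j')) * u j
      = (∑ j, Real.exp (w j) * u j) / (∑ j', Real.exp (w j')) := by
    rw [Finset.sum_div]
    exact Finset.sum_congr rfl fun j _ => by ring
  rw [hsum]
  field_simp
  ring

lemma differentiableAt_softmax (i : V) (w : V → ℝ) :
    DifferentiableAt ℝ (fun z => softmax z i) w :=
  (hasFDerivAt_softmax i w).differentiableAt

lemma differentiableAt_Dmap (k : V) (w : V → ℝ) :
    DifferentiableAt ℝ (fun z => Dmap z k) w := by
  unfold Dmap
  apply DifferentiableAt.smul (differentiableAt_softmax k w)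
  apply DifferentiableAt.sub (differentiableAt_const _)
  apply DifferentiableAt.fun_sum
  exact fun j _ => DifferentiableAt.smul (differentiableAt_softmax j w) (differentiableAt_const _)

end SoftmaxAux

open SoftmaxAux in
/-- **Second directional derivative of softmax (Hessian quadratic form of the PPO loss).**
For `f z = softmax z k`, the second directional derivative of `f` at `z` along `v` equals
`π k * ((v k − E_π(v))² − Var_π(v))` where `π = softmax z`,
`E_π(v) = ∑ i, π i * v i` and `Var_π(v) = ∑ i, π i * (v i)² − (E_π(v))²`. -/
theorem softmax_second_directional_deriv
    {V : Type*} [Fintype V] [Nonempty V] (k : V) (z v : V → ℝ) :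
    iteratedFDeriv ℝ 2 (fun w : V → ℝ => softmax w k) z ![v, v]
      = softmax z k *
          ((v k - ∑ i, softmax z i * v i) ^ 2
            - (∑ i, softmax z i * v i ^ 2 - (∑ i, softmax z i * v i) ^ 2)) := by
  rw [iteratedFDeriv_two_apply]
  have hfd : (fderiv ℝ fun w : V → ℝ => softmax w k) = fun w => Dmap w k :=
    funext fun w => (hasFDerivAt_softmax k w).fderiv
  rw [hfd]
  -- reduce to derivative of the scalar function w ↦ Dmap w k v
  have hflip : fderiv ℝ (fun w : V → ℝ => Dmap w k) z (![v, v] 0) (![v, v] 1)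
      = fderiv ℝ (fun w : V → ℝ => Dmap w k v) z v := by
    have := fderiv_clm_apply (differentiableAt_Dmap k z)
      (differentiableAt_const v) (x := z)
    rw [this]
    simp [Matrix.cons_val_zero, Matrix.cons_val_one]
  rw [hflip]
  -- compute the derivative of the scalar function
  set E : ℝ := ∑ i, softmax z i * v i with hE
  have hg : HasFDerivAt (fun w : V → ℝ => Dmap w k v)
      ((softmax z k • (0 - ∑ j, v j • Dmap z j)) + (v k - E) • Dmap z k) z := by
    have h1 : HasFDerivAt (fun w : V → ℝ => softmax w k) (Dmap z k) z :=
      hasFDerivAt_softmax k z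
    have h2 : HasFDerivAt (fun w : V → ℝ => v k - ∑ j, softmax w j * v j)
        (0 - ∑ j, v j • Dmap z j) z := by
      apply HasFDerivAt.sub (hasFDerivAt_const _ _)
      have : HasFDerivAt (fun w : V → ℝ => ∑ j, softmax w j * v j)
          (∑ j, v j • Dmap z j) z := by
        apply HasFDerivAt.fun_sum
        intro j _
        exact (hasFDerivAt_softmax j z).mul_const (v j)
      exact this
    have h := h1.fun_mul h2
    have hfun2 : (fun w : V → ℝ => Dmap w k v)
        = fun w : V → ℝ => softmax w k * (v k - ∑ j, softmax w j * v j) := by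
      funext w; rw [Dmap_apply]
    rw [hfun2]
    exact h
  have hfd2 : fderiv ℝ (fun w : V → ℝ => Dmap w k v) z v
      = (softmax z k • (0 - ∑ j, v j • Dmap z j) + (v k - E) • Dmap z k) v := by
    rw [hg.fderiv]
  rw [hfd2]
  simp only [ContinuousLinearMap.add_apply, ContinuousLinearMap.smul_apply,
    ContinuousLinearMap.sub_apply, ContinuousLinearMap.zero_apply,
    ContinuousLinearMap.sum_apply, Dmap_apply, smul_eq_mul, ← hE]
  have hsum : ∑ j, v j * (softmax z j * (v j - E))
      = (∑ j, softmax z j * v j ^ 2) - E * E := by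
    have : ∀ j : V, v j * (softmax z j * (v j - E))
        = softmax z j * v j ^ 2 - (softmax z j * v j) * E := fun j => by ring
    rw [Finset.sum_congr rfl fun j _ => this j, Finset.sum_sub_distrib, ← Finset.sum_mul, ← hE]
  rw [hsum]
  ring
end

section
/- Let V be a finite set with at least two elements, fix a ∈ V, and let A ≠ 0 and c > 0 be real constants. The unclipped PPO surrogate loss at a single time step, the function f : ℝ^V → ℝ given by f(z) = −(A/c)·softmax(z)(a), is neither convex nor concave on ℝ^V. (The PPO loss is not logits convex at any time step.) -/
open Finset

/-- **The PPO loss is not logits convex.**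
For a finite set `V` with at least two elements, a sampled action `a`, an advantage
`A ≠ 0` and `c > 0`, the unclipped PPO surrogate loss `z ↦ −(A/c) * softmax z a`
is neither convex nor concave on `ℝ^V`. -/
theorem ppo_loss_not_convex_not_concave
    {V : Type*} [Fintype V] (hcard : 1 < Fintype.card V) (a : V)
    (A c : ℝ) (hA : A ≠ 0) (hc : 0 < c) :
    ¬ ConvexOn ℝ Set.univ (fun z : V → ℝ => -(A / c) * softmax z a) ∧
    ¬ ConcaveOn ℝ Set.univ (fun z : V → ℝ => -(A / c) * softmax z a) := by
  classical
  set k : ℝ := -(A / c) with hkdef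
  have hk0 : k ≠ 0 := by
    simp only [hkdef, ne_eq, neg_eq_zero, div_eq_zero_iff, not_or]
    exact ⟨hA, ne_of_gt hc⟩
  set m : ℝ := ((Fintype.card V - 1 : ℕ) : ℝ) with hmdef
  have hm : 0 < m := by
    have h1 : 1 ≤ Fintype.card V - 1 := by omega
    have := Nat.cast_le (α := ℝ).mpr h1
    simp only [Nat.cast_one] at this
    linarith [this]
  set z : ℝ → V → ℝ := fun t b => if b = a then Real.log m + t else 0 with hz
  -- softmax along this line is the standard logistic
  have hsm : ∀ t, softmax (z t) a = Real.exp t / (Real.exp t + 1) := by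
    intro t
    have hsum : ∑ b, Real.exp (z t b) = m * Real.exp t + m := by
      rw [← Finset.add_sum_erase _ _ (Finset.mem_univ a)]
      have h1 : Real.exp (z t a) = m * Real.exp t := by
        simp [hz, Real.exp_add, Real.exp_log hm]
      have h2 : ∑ b ∈ Finset.univ.erase a, Real.exp (z t b) = m := by
        have hone : ∀ b ∈ Finset.univ.erase a, Real.exp (z t b) = 1 := fun b hb => by
          simp [hz, (Finset.mem_erase.mp hb).1]
        rw [Finset.sum_congr rfl hone, Finset.sum_const,
          Finset.card_erase_of_mem (Finset.mem_univ a)]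
        simp [hmdef]
      rw [h1, h2]
    have hza : Real.exp (z t a) = m * Real.exp t := by
      simp [hz, Real.exp_add, Real.exp_log hm]
    rw [softmax, hsum, hza]
    rw [show m * Real.exp t + m = m * (Real.exp t + 1) by ring]
    exact mul_div_mul_left _ _ (ne_of_gt hm)
  -- the line is affine
  have haff : ∀ t1 t2 : ℝ,
      (1/2 : ℝ) • z t1 + (1/2 : ℝ) • z t2 = z ((t1 + t2) / 2) := by
    intro t1 t2
    funext b
    simp only [hz, Pi.add_apply, Pi.smul_apply, smul_eq_mul]
    split_ifs <;> ring
  -- values of the logistic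
  have e3 : Real.exp (Real.log 3) = 3 := Real.exp_log (by norm_num)
  have e9 : Real.exp (2 * Real.log 3) = 9 := by
    rw [two_mul, Real.exp_add, e3]; norm_num
  have en3 : Real.exp (-Real.log 3) = 1/3 := by
    rw [Real.exp_neg, e3]; norm_num
  have en9 : Real.exp (-(2 * Real.log 3)) = 1/9 := by
    rw [Real.exp_neg, e9]; norm_num
  have half : (0:ℝ) ≤ 1/2 := by norm_num
  have hhalf : (1/2 : ℝ) + 1/2 = 1 := by norm_num
  constructor
  · intro h
    have h1 := h.2 (Set.mem_univ (z 0)) (Set.mem_univ (z (2 * Real.log 3))) half half hhalf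
    have h2 := h.2 (Set.mem_univ (z 0)) (Set.mem_univ (z (-(2 * Real.log 3)))) half half hhalf
    rw [haff] at h1 h2
    simp only [hsm, smul_eq_mul] at h1 h2
    rw [show (0 + 2 * Real.log 3) / 2 = Real.log 3 by ring] at h1
    rw [show (0 + -(2 * Real.log 3)) / 2 = -Real.log 3 by ring] at h2
    rw [Real.exp_zero, e3, e9] at h1
    rw [Real.exp_zero, en3, en9] at h2
    norm_num at h1 h2
    -- h1 : k * (3/4) ≤ ..., h2 : k * (1/4) ≤ ...
    apply hk0
    clear_value k
    linarith
  · intro h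
    have h1 := h.2 (Set.mem_univ (z 0)) (Set.mem_univ (z (2 * Real.log 3))) half half hhalf
    have h2 := h.2 (Set.mem_univ (z 0)) (Set.mem_univ (z (-(2 * Real.log 3)))) half half hhalf
    rw [haff] at h1 h2
    simp only [hsm, smul_eq_mul] at h1 h2
    rw [show (0 + 2 * Real.log 3) / 2 = Real.log 3 by ring] at h1
    rw [show (0 + -(2 * Real.log 3)) / 2 = -Real.log 3 by ring] at h2
    rw [Real.exp_zero, e3, e9] at h1
    rw [Real.exp_zero, en3, en9] at h2
    norm_num at h1 h2
    apply hk0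
    clear_value k
    linarith
end

section
/- Let V be a nonempty finite set with n = |V|, let z* : V → ℝ, let z : ℝ^p → ℝ^V be differentiable at θ with Jacobian J = Dz(θ), and let σ be the operator norm of J. For the composite LCO log-cosh loss ℓ(θ) = (1/n)·∑_{a∈V} log(cosh(z(θ)(a) − z*(a))), the gradient norm at θ satisfies ‖∇_θ ℓ(θ)‖ ≤ (1/n)·σ·√(n·(1 − exp(−2·ℓ(θ)))). -/
open Finset

/-- **Gradient norm upper bound for the composite LCO log-cosh loss.**
If `z : ℝ^p → ℝ^V` is differentiable at `θ` with Jacobian `J` of operator norm `σ = ‖J‖`,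
then the composite loss `ℓ θ = (1/n) * ∑ a, log (cosh (z θ a − z* a))` with `n = |V|`
satisfies `‖∇ℓ θ‖ ≤ (1/n) * σ * √(n * (1 − exp (−2 * ℓ θ)))`. -/
theorem lco_logcosh_gradient_norm_bound
    {V : Type*} [Fintype V] [Nonempty V] {p : ℕ}
    (zstar : V → ℝ)
    (z : EuclideanSpace ℝ (Fin p) → EuclideanSpace ℝ V)
    (θ : EuclideanSpace ℝ (Fin p))
    (J : EuclideanSpace ℝ (Fin p) →L[ℝ] EuclideanSpace ℝ V)
    (hz : HasFDerivAt z J θ)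
    (ℓ : EuclideanSpace ℝ (Fin p) → ℝ)
    (hℓ : ℓ = fun θ' =>
      (1 / (Fintype.card V : ℝ)) * ∑ a, Real.log (Real.cosh (z θ' a - zstar a))) :
    ‖gradient ℓ θ‖
      ≤ (1 / (Fintype.card V : ℝ)) * ‖J‖ *
          Real.sqrt ((Fintype.card V : ℝ) * (1 - Real.exp (-2 * ℓ θ))) := by
  classical
  set n : ℝ := (Fintype.card V : ℝ) with hn
  have hn0 : (0:ℝ) < n := by
    rw [hn]
    exact_mod_cast Fintype.card_pos (α := V)
  set u : V → ℝ := fun a => z θ a - zstar a with hu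
  set w : EuclideanSpace ℝ V := WithLp.toLp 2 (fun a => n⁻¹ * Real.tanh (u a)) with hw
  -- derivative of the outer function
  have hg : HasFDerivAt
      (fun y : EuclideanSpace ℝ V => (1 / n) * ∑ a, Real.log (Real.cosh (y a - zstar a)))
      (innerSL ℝ w) (z θ) := by
    have h1 : HasFDerivAt
        (fun y : EuclideanSpace ℝ V => ∑ a, Real.log (Real.cosh (y a - zstar a)))
        (∑ a, Real.tanh (u a) • (EuclideanSpace.proj a : EuclideanSpace ℝ V →L[ℝ] ℝ)) (z θ) := by
      apply HasFDerivAt.fun_sum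
      intro a _
      have hs : HasDerivAt (fun s : ℝ => Real.log (Real.cosh (s - zstar a)))
          (Real.tanh (u a)) (z θ a) := by
        have hc : HasDerivAt (fun s : ℝ => Real.cosh (s - zstar a))
            (Real.sinh (z θ a - zstar a)) (z θ a) := by
          simpa using ((hasDerivAt_id (z θ a)).sub_const (zstar a)).cosh
        have := hc.log (ne_of_gt (Real.cosh_pos _))
        simpa [Real.tanh_eq_sinh_div_cosh, hu] using this
      have hproj : HasFDerivAt (fun y : EuclideanSpace ℝ V => y a)
          (EuclideanSpace.proj a : EuclideanSpace ℝ V →L[ℝ] ℝ) (z θ) :=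
        (EuclideanSpace.proj a : EuclideanSpace ℝ V →L[ℝ] ℝ).hasFDerivAt
      exact HasDerivAt.comp_hasFDerivAt (z θ) hs hproj
    have h2 := h1.const_mul (1 / n)
    have heq : innerSL ℝ w =
        (1 / n) • ∑ a, Real.tanh (u a) • (EuclideanSpace.proj a : EuclideanSpace ℝ V →L[ℝ] ℝ) := by
      ext v
      simp [hw, PiLp.inner_apply, ContinuousLinearMap.sum_apply, Finset.mul_sum,
        RCLike.inner_apply]
      refine Finset.sum_congr rfl fun a _ => by ring
    rw [heq]
    exact h2
  have hF : HasFDerivAt ℓ ((innerSL ℝ w).comp J) θ := by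
    rw [hℓ]
    exact hg.comp θ hz
  -- norm of gradient equals norm of fderiv
  have hgradnorm : ‖gradient ℓ θ‖ = ‖(innerSL ℝ w).comp J‖ := by
    rw [gradient, hF.fderiv, LinearIsometryEquiv.norm_map]
  -- key scalar inequality
  have key : ∑ a, Real.tanh (u a) ^ 2 ≤ n * (1 - Real.exp (-2 * ℓ θ)) := by
    have hL : ℓ θ = (1/n) * ∑ a, Real.log (Real.cosh (u a)) := by rw [hℓ]
    have htanh : ∀ a : V, Real.tanh (u a) ^ 2
        = 1 - Real.exp (-2 * Real.log (Real.cosh (u a))) := by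
      intro a
      have hc := Real.cosh_pos (u a)
      have he : Real.exp (-2 * Real.log (Real.cosh (u a))) = ((Real.cosh (u a))⁻¹) ^ 2 := by
        rw [show (-2:ℝ) * Real.log (Real.cosh (u a))
            = -Real.log (Real.cosh (u a)) + -Real.log (Real.cosh (u a)) by ring,
          Real.exp_add, Real.exp_neg, Real.exp_log hc]
        ring
      rw [he, Real.tanh_eq_sinh_div_cosh, div_pow, Real.sinh_sq]
      field_simp
    have hjen : Real.exp (-2 * ℓ θ)
        ≤ (1/n) * ∑ a, Real.exp (-2 * Real.log (Real.cosh (u a))) := by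
      have hcard : ∑ _a : V, (1/n) = 1 := by
        simp only [Finset.sum_const, Finset.card_univ, nsmul_eq_mul]
        field_simp
        exact hn.symm
      have hj := convexOn_exp.map_sum_le (t := Finset.univ) (w := fun _ : V => 1/n)
        (p := fun a => -2 * Real.log (Real.cosh (u a)))
        (fun _ _ => by positivity) hcard (fun _ _ => Set.mem_univ _)
      have harg : ∑ a : V, (1/n) • (-2 * Real.log (Real.cosh (u a))) = -2 * ℓ θ := by
        rw [hL, Finset.mul_sum]
        rw [Finset.mul_sum]
        refine Finset.sum_congr rfl fun a _ => by simp [smul_eq_mul]; ring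
      rw [harg] at hj
      calc Real.exp (-2 * ℓ θ)
          ≤ ∑ a : V, (1/n) * Real.exp (-2 * Real.log (Real.cosh (u a))) := hj
        _ = (1/n) * ∑ a, Real.exp (-2 * Real.log (Real.cosh (u a))) := by
            rw [Finset.mul_sum]
    have hsum : ∑ a, Real.tanh (u a) ^ 2
        = n - ∑ a, Real.exp (-2 * Real.log (Real.cosh (u a))) := by
      rw [Finset.sum_congr rfl fun a _ => htanh a, Finset.sum_sub_distrib]
      simp [Finset.card_univ]
      exact hn.symm
    have hjen' : n * Real.exp (-2 * ℓ θ)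
        ≤ ∑ a, Real.exp (-2 * Real.log (Real.cosh (u a))) := by
      have := mul_le_mul_of_nonneg_left hjen (le_of_lt hn0)
      calc n * Real.exp (-2 * ℓ θ)
          ≤ n * ((1/n) * ∑ a, Real.exp (-2 * Real.log (Real.cosh (u a)))) := this
        _ = ∑ a, Real.exp (-2 * Real.log (Real.cosh (u a))) := by
            field_simp
    rw [hsum]
    nlinarith [hjen']
  -- bound on ‖w‖
  have hwn : ‖w‖ ≤ (1/n) * Real.sqrt (n * (1 - Real.exp (-2 * ℓ θ))) := by
    rw [EuclideanSpace.norm_eq]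
    have hssum : ∑ a, ‖w a‖ ^ 2 = (1/n)^2 * ∑ a, Real.tanh (u a) ^ 2 := by
      rw [Finset.mul_sum]
      refine Finset.sum_congr rfl fun a _ => ?_
      show ‖n⁻¹ * Real.tanh (u a)‖ ^ 2 = _
      rw [Real.norm_eq_abs, sq_abs]
      ring
    rw [hssum]
    have h1 : (1/n)^2 * ∑ a, Real.tanh (u a) ^ 2
        ≤ (1/n)^2 * (n * (1 - Real.exp (-2 * ℓ θ))) :=
      mul_le_mul_of_nonneg_left key (by positivity)
    calc Real.sqrt ((1/n)^2 * ∑ a, Real.tanh (u a) ^ 2)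
        ≤ Real.sqrt ((1/n)^2 * (n * (1 - Real.exp (-2 * ℓ θ)))) := Real.sqrt_le_sqrt h1
      _ = (1/n) * Real.sqrt (n * (1 - Real.exp (-2 * ℓ θ))) := by
          rw [Real.sqrt_mul (by positivity), Real.sqrt_sq (by positivity)]
  -- put things together
  rw [hgradnorm]
  calc ‖(innerSL ℝ w).comp J‖ ≤ ‖innerSL ℝ w‖ * ‖J‖ := ContinuousLinearMap.opNorm_comp_le _ _
    _ = ‖w‖ * ‖J‖ := by rw [innerSL_apply_norm]
    _ ≤ ((1/n) * Real.sqrt (n * (1 - Real.exp (-2 * ℓ θ)))) * ‖J‖ :=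
        mul_le_mul_of_nonneg_right hwn (norm_nonneg J)
    _ = (1/n) * ‖J‖ * Real.sqrt (n * (1 - Real.exp (-2 * ℓ θ))) := by ring
end

section
/- Let V be a nonempty finite set, let π* be a probability distribution on V, let z : ℝ^p → ℝ^V be differentiable at θ with Jacobian J = Dz(θ), and let σ be the operator norm of J. For the composite LCO-KLD loss ℓ(θ) = ∑_{a∈V} π*(a)·log(π*(a)/softmax(z(θ))(a)) (with 0·log 0 = 0), the gradient norm at θ satisfies ‖∇_θ ℓ(θ)‖ ≤ σ·√(2·ℓ(θ)). -/
open scoped RealInnerProductSpace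


open Finset

lemma log_ge_low {t : ℝ} (h0 : 0 < t) (h1 : t ≤ 1) : (t^2 - 1)/(2*t) ≤ Real.log t := by
  set f : ℝ → ℝ := fun x => Real.log x - x/2 + (1/2) * x⁻¹ with hf
  have hder : ∀ x ∈ Set.Ioo (0:ℝ) 1, HasDerivAt f (x⁻¹ - 1/2 + (1/2) * (-(x^2)⁻¹)) x := by
    intro x hx
    exact ((Real.hasDerivAt_log hx.1.ne').sub ((hasDerivAt_id x).div_const 2)).add
      ((hasDerivAt_inv hx.1.ne').const_mul (1/2))
  have hcont : ContinuousOn f (Set.Ioc 0 1) := by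
    intro x hx
    have : HasDerivAt f (x⁻¹ - 1/2 + (1/2) * (-(x^2)⁻¹)) x :=
      ((Real.hasDerivAt_log hx.1.ne').sub ((hasDerivAt_id x).div_const 2)).add
        ((hasDerivAt_inv hx.1.ne').const_mul (1/2))
    exact this.continuousAt.continuousWithinAt
  have hanti : AntitoneOn f (Set.Ioc 0 1) := by
    apply antitoneOn_of_deriv_nonpos (convex_Ioc 0 1) hcont
    · intro x hx
      rw [interior_Ioc] at hx
      exact (hder x hx).differentiableAt.differentiableWithinAt
    · intro x hx
      rw [interior_Ioc] at hx
      rw [(hder x hx).deriv]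
      have hx0 := hx.1
      have : x⁻¹ - 1/2 + (1/2) * (-(x^2)⁻¹) = -((x-1)^2/(2*x^2)) := by
        field_simp; ring
      rw [this]
      have : 0 ≤ (x-1)^2/(2*x^2) := by positivity
      linarith
  have h := hanti (Set.mem_Ioc.2 ⟨h0, h1⟩) (Set.mem_Ioc.2 ⟨one_pos, le_refl 1⟩) h1
  have hf1 : f 1 = 0 := by simp [hf]
  have hft : f t = Real.log t - t/2 + (1/2) * t⁻¹ := rfl
  have hident : (t^2 - 1)/(2*t) = t/2 - (1/2) * t⁻¹ := by field_simp
  rw [hident]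
  rw [hf1, hft] at h
  linarith

lemma log_ge_two {t : ℝ} (ht : 1 ≤ t) : 2*(t-1)/(t+1) ≤ Real.log t := by
  set f : ℝ → ℝ := fun x => Real.log x - 2*(x-1)/(x+1) with hf
  have hder : ∀ x : ℝ, 0 < x → HasDerivAt f
      (x⁻¹ - (2*(x+1) - 2*(x-1)*1)/((x+1)^2)) x := by
    intro x hx
    have h1 : HasDerivAt (fun y : ℝ => 2*(y-1)) 2 x := by
      simpa using (((hasDerivAt_id x).sub_const 1).const_mul 2)
    have h2 : HasDerivAt (fun y : ℝ => y+1) 1 x := (hasDerivAt_id x).add_const 1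
    have h3 : HasDerivAt (fun y : ℝ => 2*(y-1)/(y+1))
        ((2*(x+1) - 2*(x-1)*1)/((x+1)^2)) x := h1.div h2 (by linarith)
    exact (Real.hasDerivAt_log hx.ne').sub h3
  have hmono : MonotoneOn f (Set.Ici 1) := by
    apply monotoneOn_of_deriv_nonneg (convex_Ici 1)
    · intro x hx
      have hx0 : (0:ℝ) < x := lt_of_lt_of_le one_pos hx
      exact (hder x hx0).continuousAt.continuousWithinAt
    · intro x hx
      rw [interior_Ici] at hx
      exact (hder x (lt_trans one_pos hx)).differentiableAt.differentiableWithinAt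
    · intro x hx
      rw [interior_Ici] at hx
      have hx0 : (0:ℝ) < x := lt_trans one_pos hx
      rw [(hder x hx0).deriv]
      have : x⁻¹ - (2*(x+1) - 2*(x-1)*1)/((x+1)^2) = (x-1)^2/(x*(x+1)^2) := by
        field_simp; ring
      rw [this]; positivity
  have h := hmono (Set.mem_Ici.2 (le_refl 1)) (Set.mem_Ici.2 ht) ht
  have hf1 : f 1 = 0 := by simp [hf]
  rw [hf1] at h
  have : f t = Real.log t - 2*(t-1)/(t+1) := rfl
  linarith [h, this ▸ h]

lemma kl_quad {x y : ℝ} (hx0 : 0 ≤ x) (hx1 : x ≤ 1) (hy0 : 0 < y) (hy1 : y ≤ 1) :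
    (x - y)^2 ≤ 2 * (x * Real.log (x / y) - x + y) := by
  rcases eq_or_lt_of_le hx0 with h0 | h0
  · rw [← h0]; simp; nlinarith
  · set t : ℝ := x / y with ht
    have ht0 : 0 < t := div_pos h0 hy0
    have hxty : x = t * y := by rw [ht]; field_simp
    rcases le_or_gt t 1 with h | h
    · have hlog := log_ge_low ht0 h
      have key : (t-1)^2 ≤ 2*(t*Real.log t - t + 1) := by
        have h2 : t * ((t^2-1)/(2*t)) ≤ t * Real.log t :=
          mul_le_mul_of_nonneg_left hlog ht0.le
        have h3 : t * ((t^2-1)/(2*t)) = (t^2-1)/2 := by field_simp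
        nlinarith
      have hyy : y^2 * (t-1)^2 ≤ y * (t-1)^2 := by nlinarith [mul_nonneg (by nlinarith : (0:ℝ) ≤ y - y^2) (sq_nonneg (t-1))]
      calc (x - y)^2 = y^2*(t-1)^2 := by rw [hxty]; ring
        _ ≤ y*(t-1)^2 := hyy
        _ ≤ y*(2*(t*Real.log t - t + 1)) := mul_le_mul_of_nonneg_left key hy0.le
        _ = 2*(x*Real.log t - x + y) := by rw [hxty]; ring
    · have hlog := log_ge_two h.le
      have h4 : t * (2*(t-1)/(t+1)) ≤ t * Real.log t :=
        mul_le_mul_of_nonneg_left hlog ht0.le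
      have hid : t * (2*(t-1)/(t+1)) - t + 1 = (t-1)^2/(t+1) := by
        field_simp; ring
      have key2 : 2*((t-1)^2/(t+1)) ≤ 2*(t*Real.log t - t + 1) := by linarith
      have hyt : y * t ≤ 1 := by rw [hxty] at hx1; linarith [hx1]
      have hyle : y ≤ 2/(t+1) := by
        rw [le_div_iff₀ (by linarith : (0:ℝ) < t + 1)]
        nlinarith
      have hmid : y^2*(t-1)^2 ≤ y * (2*((t-1)^2/(t+1))) := by
        have := mul_le_mul_of_nonneg_right hyle
          (mul_nonneg hy0.le (sq_nonneg (t-1)))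
        calc y^2*(t-1)^2 = y * (y*(t-1)^2) := by ring
          _ ≤ (2/(t+1)) * (y*(t-1)^2) := this
          _ = y * (2*((t-1)^2/(t+1))) := by ring
      calc (x - y)^2 = y^2*(t-1)^2 := by rw [hxty]; ring
        _ ≤ y * (2*((t-1)^2/(t+1))) := hmid
        _ ≤ y*(2*(t*Real.log t - t + 1)) := mul_le_mul_of_nonneg_left key2 hy0.le
        _ = 2*(x*Real.log t - x + y) := by rw [hxty]; ring


/-- **Gradient norm upper bound for the composite LCO-KLD loss.**
If `z : ℝ^p → ℝ^V` is differentiable at `θ` with Jacobian `J` of operator norm `σ = ‖J‖`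
and `π*` is a probability distribution on `V`, then the composite loss
`ℓ θ = ∑ a, π* a * log (π* a / softmax (z θ) a)` satisfies `‖∇ℓ θ‖ ≤ σ * √(2 * ℓ θ)`. -/
theorem lco_kld_gradient_norm_bound
    {V : Type*} [Fintype V] [Nonempty V] {p : ℕ}
    (piStar : V → ℝ) (hp0 : ∀ a, 0 ≤ piStar a) (hp1 : ∑ a, piStar a = 1)
    (z : EuclideanSpace ℝ (Fin p) → EuclideanSpace ℝ V)
    (θ : EuclideanSpace ℝ (Fin p))
    (J : EuclideanSpace ℝ (Fin p) →L[ℝ] EuclideanSpace ℝ V)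
    (hz : HasFDerivAt z J θ)
    (ℓ : EuclideanSpace ℝ (Fin p) → ℝ)
    (hℓ : ℓ = fun θ' => ∑ a, piStar a * Real.log (piStar a / softmax (z θ') a)) :
    ‖gradient ℓ θ‖ ≤ ‖J‖ * Real.sqrt (2 * ℓ θ) := by
  classical
  have hS : ∀ w : EuclideanSpace ℝ V, 0 < ∑ a, Real.exp (w a) :=
    fun w => Finset.sum_pos (fun a _ => Real.exp_pos _) Finset.univ_nonempty
  have hsm_pos : ∀ (w : EuclideanSpace ℝ V) (a : V), 0 < softmax w a :=
    fun w a => div_pos (Real.exp_pos _) (hS w)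
  -- rewrite ℓ
  have hgeq : ℓ = fun θ' => (∑ a, piStar a * Real.log (piStar a))
      - (∑ a, piStar a * (z θ') a) + Real.log (∑ a, Real.exp ((z θ') a)) := by
    rw [hℓ]; funext θ'
    have h1 : ∀ a : V, piStar a * Real.log (piStar a / softmax (z θ') a)
        = piStar a * Real.log (piStar a) - piStar a * (z θ') a
          + piStar a * Real.log (∑ a', Real.exp ((z θ') a')) := by
      intro a
      rcases eq_or_lt_of_le (hp0 a) with h0 | h0
      · rw [← h0]; simp
      · rw [Real.log_div h0.ne' (hsm_pos _ a).ne']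
        have : Real.log (softmax (z θ') a)
            = (z θ') a - Real.log (∑ a', Real.exp ((z θ') a')) := by
          unfold softmax
          rw [Real.log_div (Real.exp_ne_zero _) (hS (z θ')).ne', Real.log_exp]
        rw [this]; ring
    rw [Finset.sum_congr rfl (fun a _ => h1 a), Finset.sum_add_distrib,
      Finset.sum_sub_distrib, ← Finset.sum_mul, hp1, one_mul]
  set w₀ : EuclideanSpace ℝ V := z θ with hw₀
  set S₀ : ℝ := ∑ a, Real.exp (w₀ a) with hS₀
  set P : V → (EuclideanSpace ℝ V →L[ℝ] ℝ) := fun a => EuclideanSpace.proj a with hP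
  have h1 : HasFDerivAt (fun w : EuclideanSpace ℝ V => ∑ a, piStar a * w a)
      (∑ a, piStar a • P a) w₀ :=
    HasFDerivAt.fun_sum fun a _ => ((P a).hasFDerivAt.const_mul (piStar a))
  have h2exp : HasFDerivAt (fun w : EuclideanSpace ℝ V => ∑ a, Real.exp (w a))
      (∑ a, Real.exp (w₀ a) • P a) w₀ :=
    HasFDerivAt.fun_sum fun a _ =>
      (Real.hasDerivAt_exp (w₀ a)).comp_hasFDerivAt (f := fun w : EuclideanSpace ℝ V => w a) w₀ (P a).hasFDerivAt
  have h2 : HasFDerivAt (fun w : EuclideanSpace ℝ V => Real.log (∑ a, Real.exp (w a)))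
      (S₀⁻¹ • ∑ a, Real.exp (w₀ a) • P a) w₀ := h2exp.log (hS w₀).ne'
  set D : EuclideanSpace ℝ V →L[ℝ] ℝ :=
    ((0 : EuclideanSpace ℝ V →L[ℝ] ℝ) - ∑ a, piStar a • P a)
      + S₀⁻¹ • ∑ a, Real.exp (w₀ a) • P a with hD
  have hg : HasFDerivAt (fun w : EuclideanSpace ℝ V =>
      (∑ a, piStar a * Real.log (piStar a)) - (∑ a, piStar a * w a)
        + Real.log (∑ a, Real.exp (w a))) D w₀ :=
    ((hasFDerivAt_const _ _).sub h1).add h2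
  have hℓ' : HasFDerivAt ℓ (D.comp J) θ := by
    rw [hgeq]; exact hg.comp θ hz
  set d : EuclideanSpace ℝ V :=
    (WithLp.equiv 2 (V → ℝ)).symm (fun a => softmax w₀ a - piStar a) with hd
  have hd_apply : ∀ a, d a = softmax w₀ a - piStar a := fun a => rfl
  have hDv : ∀ v : EuclideanSpace ℝ V, D v = (inner ℝ d v : ℝ) := by
    intro v
    rw [PiLp.inner_apply]
    simp only [hD, ContinuousLinearMap.add_apply, ContinuousLinearMap.sub_apply,
      ContinuousLinearMap.zero_apply, ContinuousLinearMap.smul_apply,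
      ContinuousLinearMap.sum_apply, smul_eq_mul, RCLike.inner_apply, conj_trivial,
      hd_apply]
    rw [zero_sub, neg_add_eq_sub, Finset.mul_sum, ← Finset.sum_sub_distrib]
    refine Finset.sum_congr rfl fun a _ => ?_
    have : P a v = v a := rfl
    rw [this]
    have hsm : softmax w₀ a = Real.exp (w₀ a) / S₀ := rfl
    rw [hsm, div_eq_mul_inv]; ring
  have hnormD : ‖D‖ ≤ ‖d‖ := by
    refine ContinuousLinearMap.opNorm_le_bound _ (norm_nonneg d) fun v => ?_
    rw [hDv v, Real.norm_eq_abs]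
    exact abs_real_inner_le_norm d v
  have hgrad : ‖gradient ℓ θ‖ = ‖D.comp J‖ := by
    unfold gradient
    rw [hℓ'.fderiv]
    exact LinearIsometryEquiv.norm_map _ _
  have hq1 : ∑ a, softmax w₀ a = 1 := by
    unfold softmax; rw [← Finset.sum_div]; exact div_self (hS w₀).ne'
  have hπle : ∀ a, piStar a ≤ 1 := fun a =>
    hp1 ▸ Finset.single_le_sum (fun i _ => hp0 i) (Finset.mem_univ a)
  have hqle : ∀ a, softmax w₀ a ≤ 1 := fun a =>
    hq1 ▸ Finset.single_le_sum (fun i _ => (hsm_pos w₀ i).le) (Finset.mem_univ a)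
  have hsum : ∑ a, (softmax w₀ a - piStar a)^2 ≤ 2 * ℓ θ := by
    have hpt : ∀ a : V, (piStar a - softmax w₀ a)^2
        ≤ 2 * (piStar a * Real.log (piStar a / softmax w₀ a) - piStar a + softmax w₀ a) :=
      fun a => kl_quad (hp0 a) (hπle a) (hsm_pos w₀ a) (hqle a)
    have hsum2 := Finset.sum_le_sum (fun a (_ : a ∈ Finset.univ) => hpt a)
    have hLθ : ℓ θ = ∑ a, piStar a * Real.log (piStar a / softmax w₀ a) := by
      rw [hℓ]
    calc ∑ a, (softmax w₀ a - piStar a)^2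
        = ∑ a, (piStar a - softmax w₀ a)^2 := by
          refine Finset.sum_congr rfl fun a _ => ?_; ring
      _ ≤ ∑ a, 2 * (piStar a * Real.log (piStar a / softmax w₀ a)
            - piStar a + softmax w₀ a) := hsum2
      _ = 2 * (∑ a, piStar a * Real.log (piStar a / softmax w₀ a))
            - 2 * (∑ a, piStar a) + 2 * (∑ a, softmax w₀ a) := by
          simp only [Finset.mul_sum, ← Finset.sum_sub_distrib, ← Finset.sum_add_distrib]
          refine Finset.sum_congr rfl fun a _ => ?_; ring
      _ = 2 * ℓ θ := by rw [hp1, hq1, hLθ]; ring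
  have hdnorm : ‖d‖ ≤ Real.sqrt (2 * ℓ θ) := by
    rw [EuclideanSpace.norm_eq]
    apply Real.sqrt_le_sqrt
    calc ∑ a, ‖d a‖^2 = ∑ a, (softmax w₀ a - piStar a)^2 := by
          refine Finset.sum_congr rfl fun a _ => ?_
          rw [hd_apply, Real.norm_eq_abs, sq_abs]
      _ ≤ 2 * ℓ θ := hsum
  calc ‖gradient ℓ θ‖ = ‖D.comp J‖ := hgrad
    _ ≤ ‖D‖ * ‖J‖ := D.opNorm_comp_le J
    _ ≤ ‖d‖ * ‖J‖ := mul_le_mul_of_nonneg_right hnormD (norm_nonneg J)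
    _ ≤ Real.sqrt (2 * ℓ θ) * ‖J‖ := mul_le_mul_of_nonneg_right hdnorm (norm_nonneg J)
    _ = ‖J‖ * Real.sqrt (2 * ℓ θ) := mul_comm _ _
end
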